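/- arXiv:0811.3390 — 7 statements merged into one kernel-verified Lean document; each statement's English description precedes it below -/
import Mathlib

section
/- Let a and b be coprime integers with 0 < a < b and let β ∈ ℂ. Fix j ∈ {0,1,…,b−1} and assume (β − ja)/b ∉ ℕ. Define c_m = ((β − ja)/b)_{am} · j! / (j + bm)! for m ∈ ℕ. Then c_m ≠ 0 for every m, the ratio |c_{m+1}/c_m| tends to 0 as m → ∞, and consequently the power series Σ_{m≥0} c_m z^m converges absolutely for every z ∈ ℂ. -/
open Filter Finset Polynomial

/-!
With `x = (β - j a)/b`, the hypothesis on `β` says that no factor `x - k` of the Pochhammer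
symbols vanishes, so every `c_m` is nonzero. Splitting `(x)_{a(m+1)} = (x)_{am} (x - am)_a` and
`(j + b(m+1))! = (j + bm)! · (j + bm + 1)^(b)` (rising factorial), the ratio `c_{m+1}/c_m` is
`(x - am)_a / (j + bm + 1)^(b)`. The numerator is at most `((‖x‖ + a)(m + 1))^a` and the denominator
at least `(m + 1)^b`, so the ratio is `O(m^(a - b))`, which tends to `0` because `a < b`. The ratio
test then gives infinite radius of convergence.
-/

section descPochhammer

variable {R : Type*}

lemma descPochhammer_eval_ne_zero [CommRing R] [NoZeroDivisors R] [Nontrivial R] {x : R} {n : ℕ}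
    (hx : ∀ k < n, x ≠ k) : (descPochhammer R n).eval x ≠ 0 := by
  rw [descPochhammer_eval_eq_prod_range]
  exact prod_ne_zero_iff.mpr fun k hk => sub_ne_zero.mpr (hx k (mem_range.mp hk))

lemma descPochhammer_eval_add [CommRing R] (x : R) (n m : ℕ) :
    (descPochhammer R (n + m)).eval x =
      (descPochhammer R n).eval x * (descPochhammer R m).eval (x - n) := by
  simp [← descPochhammer_mul]

lemma norm_descPochhammer_eval_le [NormedCommRing R] [NormOneClass R] (x : R) (n : ℕ) :
    ‖(descPochhammer R n).eval x‖ ≤ (‖x‖ + n) ^ n := by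
  rw [descPochhammer_eval_eq_prod_range]
  calc ‖∏ k ∈ range n, (x - k)‖ ≤ ∏ k ∈ range n, ‖x - k‖ := norm_prod_le _ _
    _ ≤ ∏ _k ∈ range n, (‖x‖ + n) := by
        gcongr with k hk
        calc ‖x - k‖ ≤ ‖x‖ + ‖(k : R)‖ := norm_sub_le _ _
          _ ≤ ‖x‖ + n := by
            gcongr
            calc ‖(k : R)‖ ≤ k := by simpa using Nat.norm_cast_le (α := R) k
              _ ≤ n := by exact_mod_cast (mem_range.mp hk).le
    _ = (‖x‖ + n) ^ n := by rw [prod_const, card_range]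

end descPochhammer

lemma summable_norm_mul_pow_of_tendsto_norm_div {𝕜 : Type*} [NontriviallyNormedField 𝕜]
    {c : ℕ → 𝕜} (hc : ∀ m, c m ≠ 0)
    (hratio : Tendsto (fun m => ‖c (m + 1) / c m‖) atTop (nhds 0)) (z : 𝕜) :
    Summable fun m => ‖c m * z ^ m‖ := by
  have hradius := FormalMultilinearSeries.ofScalars_radius_eq_top_of_tendsto 𝕜 c
    (Eventually.of_forall hc) (by simpa only [norm_div] using hratio)
  simpa [norm_mul, norm_pow] using
    (FormalMultilinearSeries.ofScalars 𝕜 c).summable_norm_mul_pow (r := ‖z‖₊) (by simp [hradius])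

open Nat in
noncomputable def gammaCoeff (a b j : ℕ) (x : ℂ) (m : ℕ) : ℂ :=
  (descPochhammer ℂ (a * m)).eval x * j ! / (j + b * m)!

namespace gammaCoeff

open Nat

variable {a b j : ℕ} {x : ℂ}

lemma ne_zero (hx : ∀ n : ℕ, x ≠ n) (m : ℕ) : gammaCoeff a b j x m ≠ 0 := by
  have hP := descPochhammer_eval_ne_zero (n := a * m) fun k _ => hx k
  exact div_ne_zero (mul_ne_zero hP (mod_cast j.factorial_ne_zero))
    (mod_cast (j + b * m).factorial_ne_zero)

lemma succ_div (hx : ∀ n : ℕ, x ≠ n) (m : ℕ) :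
    gammaCoeff a b j x (m + 1) / gammaCoeff a b j x m =
      (descPochhammer ℂ a).eval (x - (a * m : ℕ)) / (j + b * m + 1).ascFactorial b := by
  have hP := descPochhammer_eval_ne_zero (n := a * m) fun k _ => hx k
  have hA : ((j + b * m + 1).ascFactorial b : ℂ) ≠ 0 := mod_cast (Nat.ascFactorial_pos _ _).ne'
  have hF : ((j + b * m)! : ℂ) ≠ 0 := mod_cast (j + b * m).factorial_ne_zero
  have hJ : (j ! : ℂ) ≠ 0 := mod_cast j.factorial_ne_zero
  unfold gammaCoeff
  rw [mul_add_one, descPochhammer_eval_add, mul_add_one, ← add_assoc,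
    ← Nat.factorial_mul_ascFactorial]
  push_cast
  field_simp

lemma norm_succ_div_le (hx : ∀ n : ℕ, x ≠ n) (hab : a < b) (m : ℕ) :
    ‖gammaCoeff a b j x (m + 1) / gammaCoeff a b j x m‖ ≤
      (‖x‖ + a) ^ a / ((m : ℝ) + 1) ^ (b - a) := by
  have hnum : ‖(descPochhammer ℂ a).eval (x - (a * m : ℕ))‖ ≤ ((‖x‖ + a) * (m + 1)) ^ a :=
    calc _ ≤ (‖x - (a * m : ℕ)‖ + a) ^ a := norm_descPochhammer_eval_le _ _
      _ ≤ ((‖x‖ + a) * (m + 1)) ^ a := by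
        gcongr
        calc ‖x - (a * m : ℕ)‖ + a ≤ ‖x‖ + a * m + a := by
              simpa using norm_sub_le x ((a * m : ℕ) : ℂ)
          _ ≤ (‖x‖ + a) * (m + 1) := by nlinarith [norm_nonneg x, m.cast_nonneg (α := ℝ)]
  have hden : ((m : ℝ) + 1) ^ b ≤ (j + b * m + 1).ascFactorial b := by
    exact_mod_cast (Nat.pow_le_pow_left (by nlinarith) b).trans (Nat.pow_succ_le_ascFactorial _ b)
  rw [succ_div hx, norm_div, Complex.norm_natCast]
  calc _ ≤ ((‖x‖ + a) * (m + 1)) ^ a / ((m : ℝ) + 1) ^ b := by gcongr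
    _ = (‖x‖ + a) ^ a / ((m : ℝ) + 1) ^ (b - a) := by
      rw [← Nat.sub_add_cancel hab.le, pow_add, mul_pow, Nat.add_sub_cancel]
      field_simp

end gammaCoeff

theorem gamma_series_generic_point_converges_general
    (a b : ℕ) (haltb : a < b)
    (β : ℂ) (j : ℕ)
    (hβ : ∀ n : ℕ, (β - (j : ℂ) * (a : ℂ)) / (b : ℂ) ≠ (n : ℂ))
    (c : ℕ → ℂ)
    (hc : ∀ m : ℕ, c m =
      (descPochhammer ℂ (a * m)).eval ((β - (j : ℂ) * (a : ℂ)) / (b : ℂ))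
        * (j.factorial : ℂ) / ((j + b * m).factorial : ℂ)) :
    (∀ m : ℕ, c m ≠ 0) ∧
    Filter.Tendsto (fun m : ℕ => ‖c (m + 1) / c m‖) Filter.atTop (nhds 0) ∧
    ∀ z : ℂ, Summable fun m : ℕ => ‖c m * z ^ m‖ := by
  have hcx : c = gammaCoeff a b j ((β - j * a) / b) := funext hc
  have hc0 : ∀ m, c m ≠ 0 := hcx ▸ gammaCoeff.ne_zero hβ
  have hratio : Tendsto (fun m => ‖c (m + 1) / c m‖) atTop (nhds 0) := by
    rw [hcx]
    refine squeeze_zero (fun _ => norm_nonneg _) (gammaCoeff.norm_succ_div_le hβ haltb) ?_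
    simpa [Function.comp_def] using
      (tendsto_const_div_pow _ (b - a) (by omega)).comp (tendsto_add_atTop_nat 1)
  exact ⟨hc0, hratio, summable_norm_mul_pow_of_tendsto_norm_div hc0 hratio⟩

/-- For coprime `0 < a < b`, `β ∈ ℂ`, `j ∈ {0,…,b-1}` with `(β - ja)/b ∉ ℕ`, the coefficients
`c_m = ((β - ja)/b)_{am} · j! / (j + bm)!` of the Γ-series `φ_{v^j}` are all nonzero, the
ratio `|c_{m+1}/c_m|` tends to `0`, and `Σ c_m z^m` converges absolutely for every `z ∈ ℂ`. -/
theorem gamma_series_generic_point_converges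
    (a b : ℕ) (hab : Nat.Coprime a b) (ha : 0 < a) (haltb : a < b)
    (β : ℂ) (j : ℕ) (hj : j < b)
    (hβ : ∀ n : ℕ, (β - (j : ℂ) * (a : ℂ)) / (b : ℂ) ≠ (n : ℂ))
    (c : ℕ → ℂ)
    (hc : ∀ m : ℕ, c m =
      (descPochhammer ℂ (a * m)).eval ((β - (j : ℂ) * (a : ℂ)) / (b : ℂ))
        * (j.factorial : ℂ) / ((j + b * m).factorial : ℂ)) :
    (∀ m : ℕ, c m ≠ 0) ∧
    Filter.Tendsto (fun m : ℕ => ‖c (m + 1) / c m‖) Filter.atTop (nhds 0) ∧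
    ∀ z : ℂ, Summable fun m : ℕ => ‖c m * z ^ m‖ :=
  gamma_series_generic_point_converges_general a b haltb β j hβ c hc
end

section
/- Let a and b be coprime integers with 0 < a < b and β ∈ ℂ. Let V_A(β) ⊆ ℂ[[x₁,x₂]] be the subspace of formal power series f with f_{(i,j)} = 0 whenever a·i + b·j = β. The ℂ-linear map E sending f to the series with coefficients (a·i + b·j − β)·f_{(i,j)} maps V_A(β) bijectively onto V_A(β). Moreover, for every real s ≥ 1, if g ∈ V_A(β) is Gevrey of order s, then the unique f ∈ V_A(β) with E f = g is Gevrey of order s. -/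
noncomputable section

abbrev M2 : Type := MvPowerSeries (Fin 2) ℂ

/-- Coefficient `f_{(i,j)}` of a formal power series `f ∈ ℂ[[x₁,x₂]]`. -/
def co (f : M2) (i j : ℕ) : ℂ :=
  MvPowerSeries.coeff (Finsupp.single (0 : Fin 2) i + Finsupp.single (1 : Fin 2) j) f

/-- A coefficient family `F` is Gevrey of order `s` along `x₂ = 0`:
`|F i j| ≤ C·R^(i+j)·(j!)^(s-1)` for some `C, R > 0`. -/
def GevreyFn (s : ℝ) (F : ℕ → ℕ → ℂ) : Prop :=
  ∃ C R : ℝ, 0 < C ∧ 0 < R ∧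
    ∀ i j : ℕ, ‖F i j‖ ≤ C * R ^ (i + j) * (j.factorial : ℝ) ^ (s - 1)

/-- A coefficient family is convergent iff it is Gevrey of order `1`, i.e.
`|F i j| ≤ C·R^(i+j)` for some `C, R > 0`. -/
def ConvFn (F : ℕ → ℕ → ℂ) : Prop := GevreyFn 1 F

/-- Coefficients of `P f` where `P = ∂₁^b - ∂₂^a`:
`(P f)_{(i,j)} = ((i+b)!/i!)·f_{(i+b,j)} - ((j+a)!/j!)·f_{(i,j+a)}`. -/
def Pco (a b : ℕ) (f : M2) (i j : ℕ) : ℂ :=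
  (((i + b).factorial / i.factorial : ℕ) : ℂ) * co f (i + b) j
    - (((j + a).factorial / j.factorial : ℕ) : ℂ) * co f i (j + a)

/-- Coefficients of `E f` where `E = a·x₁∂₁ + b·x₂∂₂ - β`:
`(E f)_{(i,j)} = (a·i + b·j - β)·f_{(i,j)}`. -/
def Eco (a b : ℕ) (β : ℂ) (f : M2) (i j : ℕ) : ℂ :=
  (((a * i + b * j : ℕ) : ℂ) - β) * co f i j

/-- Coefficients of `E_p f` where `E_p = a·(t₁+ε)∂₁ + b·x₂∂₂ - β`:
`(E_p f)_{(i,j)} = (a·i + b·j - β)·f_{(i,j)} + a·ε·(i+1)·f_{(i+1,j)}`. -/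
def Epco (a b : ℕ) (β ε : ℂ) (f : M2) (i j : ℕ) : ℂ :=
  (((a * i + b * j : ℕ) : ℂ) - β) * co f i j + (a : ℂ) * ε * ((i : ℂ) + 1) * co f (i + 1) j

/-- The Euler operator `E = a·x₁∂₁ + b·x₂∂₂ - β`, acting coefficientwise on `ℂ[[x₁,x₂]]` by
`(E f)_{(i,j)} = (a·i + b·j - β)·f_{(i,j)}`. -/
def Eop (a b : ℕ) (β : ℂ) (f : M2) : M2 :=
  fun d => (((a * d 0 + b * d 1 : ℕ) : ℂ) - β) * MvPowerSeries.coeff d f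

/-! On the coefficient `(i, j)` the operator `E` is multiplication by `a·i + b·j - β`, which
vanishes exactly where the series of `V_A(β)` are required to vanish; so on `V_A(β)` it is
inverted by coefficientwise division. The inverse preserves Gevrey bounds because the nonzero
numbers `n - β`, `n ∈ ℕ`, stay at distance at least some `δ > 0` from `0` (the image of `ℕ` in `ℂ`
is closed and discrete), so division costs at most a factor `1 / δ`. -/

open Set Metric

lemma exists_pos_le_norm_natCast_sub (β : ℂ) :
    ∃ δ > 0, ∀ n : ℕ, (n : ℂ) ≠ β → δ ≤ ‖(n : ℂ) - β‖ := by
  have hS : IsClosed (((↑) : ℕ → ℂ) '' {n | (n : ℂ) ≠ β}) :=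
    (Complex.isometry_ofReal.isClosedEmbedding.comp Nat.isClosedEmbedding_coe_real).isClosedMap _
      (isClosed_discrete _)
  have hβ : β ∉ ((↑) : ℕ → ℂ) '' {n | (n : ℂ) ≠ β} := fun ⟨_, hn, hnβ⟩ => hn hnβ
  obtain ⟨δ, hδ, hball⟩ := isOpen_iff.1 hS.isOpen_compl β hβ
  refine ⟨δ, hδ, fun n hn => ?_⟩
  have : (n : ℂ) ∉ ball β δ := fun h => hball h ⟨n, hn, rfl⟩
  simpa [mem_ball, dist_eq_norm] using this

lemma GevreyFn.of_mul_norm_le {s δ : ℝ} {F G : ℕ → ℕ → ℂ} (hδ : 0 < δ)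
    (hFG : ∀ i j, δ * ‖F i j‖ ≤ ‖G i j‖) (hG : GevreyFn s G) : GevreyFn s F := by
  obtain ⟨C, R, hC, hR, hbound⟩ := hG
  refine ⟨C / δ, R, div_pos hC hδ, hR, fun i j => ?_⟩
  rw [div_mul_eq_mul_div, div_mul_eq_mul_div, le_div_iff₀' hδ]
  exact (hFG i j).trans (hbound i j)

lemma co_apply (f : M2) (d : Fin 2 →₀ ℕ) : co f (d 0) (d 1) = MvPowerSeries.coeff d f := by
  have hd : Finsupp.single 0 (d 0) + Finsupp.single 1 (d 1) = d := by
    ext k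
    fin_cases k <;> simp
  rw [co, hd]

lemma ext_co {f g : M2} (h : ∀ i j, co f i j = co g i j) : f = g :=
  MvPowerSeries.ext fun d => by rw [← co_apply, ← co_apply, h]

def ofCo (F : ℕ → ℕ → ℂ) : M2 := fun d => F (d 0) (d 1)

lemma co_ofCo (F : ℕ → ℕ → ℂ) (i j : ℕ) : co (ofCo F) i j = F i j := by
  simp [co, ofCo, MvPowerSeries.coeff_apply]

lemma co_Eop (a b : ℕ) (β : ℂ) (f : M2) (i j : ℕ) :
    co (Eop a b β f) i j = (((a * i + b * j : ℕ) : ℂ) - β) * co f i j := by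
  simp [co, Eop, MvPowerSeries.coeff_apply]

/-- The space `V_A(β)` of the paper. -/
def nonresonantSeries (a b : ℕ) (β : ℂ) : Set M2 :=
  {f | ∀ i j : ℕ, ((a * i + b * j : ℕ) : ℂ) = β → co f i j = 0}

section nonresonantSeries

variable {a b : ℕ} {β : ℂ}

lemma co_eq_co_Eop_div {f : M2} (hf : f ∈ nonresonantSeries a b β) (i j : ℕ) :
    co f i j = co (Eop a b β f) i j / (((a * i + b * j : ℕ) : ℂ) - β) := by
  rw [co_Eop]
  by_cases h : ((a * i + b * j : ℕ) : ℂ) = β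
  · simp [hf i j h]
  · rw [mul_div_cancel_left₀ _ (sub_ne_zero.2 h)]

variable (a b β)

lemma mapsTo_Eop : MapsTo (Eop a b β) (nonresonantSeries a b β) (nonresonantSeries a b β) :=
  fun f _ i j h => by rw [co_Eop, h, sub_self, zero_mul]

lemma injOn_Eop : InjOn (Eop a b β) (nonresonantSeries a b β) :=
  fun f hf g hg h => ext_co fun i j => by rw [co_eq_co_Eop_div hf, co_eq_co_Eop_div hg, h]

lemma surjOn_Eop : SurjOn (Eop a b β) (nonresonantSeries a b β) (nonresonantSeries a b β) := by
  intro g hg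
  refine ⟨ofCo fun i j => co g i j / (((a * i + b * j : ℕ) : ℂ) - β), ?_, ?_⟩
  · intro i j h
    rw [co_ofCo, h, sub_self, div_zero]
  · exact ext_co fun i j => by
      rw [co_Eop, co_ofCo]
      exact mul_div_cancel_of_imp' fun h => hg i j (sub_eq_zero.1 h)

lemma bijOn_Eop : BijOn (Eop a b β) (nonresonantSeries a b β) (nonresonantSeries a b β) :=
  ⟨mapsTo_Eop a b β, injOn_Eop a b β, surjOn_Eop a b β⟩

lemma exists_pos_mul_norm_co_le_norm_co_Eop :
    ∃ δ > 0, ∀ f ∈ nonresonantSeries a b β, ∀ i j,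
      δ * ‖co f i j‖ ≤ ‖co (Eop a b β f) i j‖ := by
  obtain ⟨δ, hδ, hsep⟩ := exists_pos_le_norm_natCast_sub β
  refine ⟨δ, hδ, fun f hf i j => ?_⟩
  rw [co_Eop, norm_mul]
  by_cases h : ((a * i + b * j : ℕ) : ℂ) = β
  · simp [hf i j h]
  · exact mul_le_mul_of_nonneg_right (hsep _ h) (norm_nonneg _)

end nonresonantSeries

theorem euler_automorphism_of_V_general
    (a b : ℕ) (β : ℂ)
    (V : Set M2)
    (hV : V = {f : M2 | ∀ i j : ℕ, ((a * i + b * j : ℕ) : ℂ) = β → co f i j = 0}) :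
    Set.BijOn (Eop a b β) V V ∧
    ∀ s : ℝ, 1 ≤ s → ∀ f g : M2, f ∈ V → g ∈ V → Eop a b β f = g →
      GevreyFn s (co g) → GevreyFn s (co f) := by
  subst hV
  obtain ⟨δ, hδ, hEop⟩ := exists_pos_mul_norm_co_le_norm_co_Eop a b β
  refine ⟨bijOn_Eop a b β, fun s _ f g hf _ hfg hg => ?_⟩
  subst hfg
  exact hg.of_mul_norm_le hδ (hEop f hf)

/-- Let `V_A(β)` be the space of formal power series whose coefficient `f_{(i,j)}` vanishes
whenever `a·i + b·j = β`. The Euler operator `E` maps `V_A(β)` bijectively onto itself, and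
for every real `s ≥ 1`, if `g ∈ V_A(β)` is Gevrey of order `s` then the unique `f ∈ V_A(β)`
with `E f = g` is Gevrey of order `s`. -/
theorem euler_automorphism_of_V
    (a b : ℕ) (hab : Nat.Coprime a b) (ha : 0 < a) (haltb : a < b) (β : ℂ)
    (V : Set M2)
    (hV : V = {f : M2 | ∀ i j : ℕ, ((a * i + b * j : ℕ) : ℂ) = β → co f i j = 0}) :
    Set.BijOn (Eop a b β) V V ∧
    ∀ s : ℝ, 1 ≤ s → ∀ f g : M2, f ∈ V → g ∈ V → Eop a b β f = g →
      GevreyFn s (co g) → GevreyFn s (co f) :=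
  euler_automorphism_of_V_general a b β V hV

end
end

section
/- Let a and b be coprime integers with 0 < a < b and β ∈ ℂ. Let g ∈ ℂ[[x₁,x₂]] and suppose that E g, the series with coefficients (a·i + b·j − β)·g_{(i,j)}, is convergent, i.e. there exist C, R > 0 with |(a·i + b·j − β)·g_{(i,j)}| ≤ C·R^{i+j} for all i, j. Then g itself is convergent, i.e. there exist C′, R′ > 0 with |g_{(i,j)}| ≤ C′·R′^{i+j} for all i, j. -/
noncomputable section

/-! Since `a, b ≥ 1`, the multiplier `a·i + b·j - β` has modulus at least `1` as soon as
`i + j > ‖β‖`, so there `|g_{(i,j)}| ≤ |(E g)_{(i,j)}|`; the finitely many remaining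
coefficients only enlarge the constant. -/

theorem convFn_iff {F : ℕ → ℕ → ℂ} :
    ConvFn F ↔ ∃ C R : ℝ, 0 < C ∧ 0 < R ∧ ∀ i j : ℕ, ‖F i j‖ ≤ C * R ^ (i + j) := by
  simp only [ConvFn, GevreyFn, sub_self, Real.rpow_zero, mul_one]

theorem ConvFn.of_norm_le {F G : ℕ → ℕ → ℂ} (hG : ConvFn G) (N : ℕ)
    (hFG : ∀ i j : ℕ, N ≤ i + j → ‖F i j‖ ≤ ‖G i j‖) : ConvFn F := by
  obtain ⟨C, R, hC, hR, hCR⟩ := convFn_iff.1 hG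
  set S : ℝ := ∑ p ∈ Finset.range N ×ˢ Finset.range N, ‖F p.1 p.2‖
  have hS : 0 ≤ S := Finset.sum_nonneg fun _ _ => norm_nonneg _
  refine convFn_iff.2 ⟨C + S, max R 1, by positivity, by positivity, fun i j => ?_⟩
  have hpow : R ^ (i + j) ≤ max R 1 ^ (i + j) := pow_le_pow_left₀ hR.le (le_max_left _ _) _
  have hone : 1 ≤ max R 1 ^ (i + j) := one_le_pow₀ (le_max_right _ _)
  rcases le_or_gt N (i + j) with hij | hij
  · calc ‖F i j‖ ≤ C * R ^ (i + j) := (hFG i j hij).trans (hCR i j)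
      _ ≤ (C + S) * max R 1 ^ (i + j) := by gcongr; linarith
  · have hmem : (i, j) ∈ Finset.range N ×ˢ Finset.range N := by
      simp only [Finset.mem_product, Finset.mem_range]; omega
    calc ‖F i j‖ ≤ S :=
          Finset.single_le_sum (f := fun p => ‖F p.1 p.2‖) (fun _ _ => norm_nonneg _) hmem
      _ ≤ (C + S) * max R 1 ^ (i + j) := by nlinarith

theorem one_le_norm_natCast_sub {β : ℂ} {n : ℕ} (h : ‖β‖ + 1 ≤ n) : 1 ≤ ‖(n : ℂ) - β‖ := by
  have := norm_sub_norm_le (n : ℂ) β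
  rw [Complex.norm_natCast] at this
  linarith

theorem convergent_of_euler_convergent_general
    (a b : ℕ) (ha : 0 < a) (haltb : a < b) (β : ℂ)
    (g : M2)
    (h : ∃ C R : ℝ, 0 < C ∧ 0 < R ∧
      ∀ i j : ℕ, ‖(((a * i + b * j : ℕ) : ℂ) - β) * co g i j‖ ≤ C * R ^ (i + j)) :
    ∃ C' R' : ℝ, 0 < C' ∧ 0 < R' ∧
      ∀ i j : ℕ, ‖co g i j‖ ≤ C' * R' ^ (i + j) := by
  have hE : ConvFn (Eco a b β g) := convFn_iff.2 h
  refine convFn_iff.1 (hE.of_norm_le (⌈‖β‖⌉₊ + 1) fun i j hij => ?_)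
  have hweight : ⌈‖β‖⌉₊ + 1 ≤ a * i + b * j := by nlinarith
  have hβ : ‖β‖ + 1 ≤ ((a * i + b * j : ℕ) : ℝ) :=
    calc ‖β‖ + 1 ≤ ⌈‖β‖⌉₊ + 1 := by gcongr; exact Nat.le_ceil _
      _ ≤ ((a * i + b * j : ℕ) : ℝ) := by exact_mod_cast hweight
  rw [Eco, norm_mul]
  exact le_mul_of_one_le_left (norm_nonneg _) (one_le_norm_natCast_sub hβ)

/-- If `E g` is convergent, where `(E g)_{(i,j)} = (a·i + b·j - β)·g_{(i,j)}`, then `g` is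
itself convergent. -/
theorem convergent_of_euler_convergent
    (a b : ℕ) (hab : Nat.Coprime a b) (ha : 0 < a) (haltb : a < b) (β : ℂ)
    (g : M2)
    (h : ∃ C R : ℝ, 0 < C ∧ 0 < R ∧
      ∀ i j : ℕ, ‖(((a * i + b * j : ℕ) : ℂ) - β) * co g i j‖ ≤ C * R ^ (i + j)) :
    ∃ C' R' : ℝ, 0 < C' ∧ 0 < R' ∧
      ∀ i j : ℕ, ‖co g i j‖ ≤ C' * R' ^ (i + j) :=
  convergent_of_euler_convergent_general a b ha haltb β g h

end
end

section
/- Let a and b be coprime integers with 0 < a < b, β ∈ ℂ, and ε ∈ ℂ with ε ≠ 0. A formal power series f ∈ ℂ[[t₁,x₂]] satisfies E_p f = 0 if and only if for all i, j ∈ ℕ one has f_{(i,j)} = ((β − b·j)/a)_i · f_{(0,j)} / (i! · ε^i). (Equivalently, f = Σ_{k=0}^{a−1} f^{(k)} where f^{(k)} = Σ_{m≥0} f_{k+am} (t₁+ε)^{(β−bk)/a − bm} x₂^{k+am} with f_{k+am} ∈ ℂ.) -/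
noncomputable section

/-! Dividing `E_p f = 0` by `a` turns it, for each fixed `j`, into the first-order recurrence
`ε (i+1) f_{(i+1,j)} = (c_j - i) f_{(i,j)}` with `c_j = (β - b j)/a`, whose solutions are exactly
`f_{(i,j)} = (c_j)_i f_{(0,j)} / (i! ε^i)`, since `(c)_{i+1} = (c)_i (c - i)`. -/

theorem forall_recurrence_iff_eq_descPochhammer_eval {K : Type*} [Field K] [CharZero K] {ε : K}
    (hε : ε ≠ 0) (c : K) (u : ℕ → K) :
    (∀ i : ℕ, ε * (i + 1) * u (i + 1) = (c - i) * u i) ↔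
      ∀ i : ℕ, u i = (descPochhammer K i).eval c * u 0 / (i.factorial * ε ^ i) := by
  have hsucc (i : ℕ) : (i : K) + 1 ≠ 0 := Nat.cast_add_one_ne_zero i
  have hfac (i : ℕ) : (i.factorial : K) ≠ 0 := Nat.cast_ne_zero.mpr i.factorial_ne_zero
  constructor
  · intro h i
    induction i with
    | zero => simp
    | succ i ih =>
      have hstep : u (i + 1) = (c - i) * u i / (ε * (i + 1)) := by
        rw [← h i]
        field_simp [hsucc i]
      rw [hstep, ih, descPochhammer_succ_eval, Nat.factorial_succ]
      push_cast
      field_simp [hsucc i, hfac i]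
      ring
  · intro h i
    rw [h i, h (i + 1), descPochhammer_succ_eval, Nat.factorial_succ]
    push_cast
    field_simp [hsucc i, hfac i]
    ring

theorem Epco_eq_zero_iff {a b : ℕ} (ha : (a : ℂ) ≠ 0) (β ε : ℂ) (f : M2) (i j : ℕ) :
    Epco a b β ε f i j = 0 ↔
      ε * (i + 1) * co f (i + 1) j = ((β - b * j) / a - i) * co f i j := by
  unfold Epco
  push_cast
  constructor <;> intro h
  · field_simp
    linear_combination h
  · field_simp at h
    linear_combination h

theorem euler_kernel_coefficient_formula_general
    (a b : ℕ) (ha : 0 < a)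
    (β : ℂ) (ε : ℂ) (hε : ε ≠ 0) (f : M2) :
    (∀ i j : ℕ, Epco a b β ε f i j = 0) ↔
    (∀ i j : ℕ, co f i j =
      (descPochhammer ℂ i).eval ((β - (b : ℂ) * (j : ℂ)) / (a : ℂ)) * co f 0 j
        / ((i.factorial : ℂ) * ε ^ i)) := by
  have ha' : (a : ℂ) ≠ 0 := Nat.cast_ne_zero.mpr ha.ne'
  simp only [Epco_eq_zero_iff ha']
  exact forall_comm.trans <| (forall_congr' fun j ↦
    forall_recurrence_iff_eq_descPochhammer_eval hε _ (co f · j)).trans forall_comm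

/-- A formal power series `f ∈ ℂ[[t₁,x₂]]` satisfies `E_p f = 0` if and only if its
coefficients are given by `f_{(i,j)} = ((β - b·j)/a)_i · f_{(0,j)} / (i! · ε^i)`. -/
theorem euler_kernel_coefficient_formula
    (a b : ℕ) (hab : Nat.Coprime a b) (ha : 0 < a) (haltb : a < b)
    (β : ℂ) (ε : ℂ) (hε : ε ≠ 0) (f : M2) :
    (∀ i j : ℕ, Epco a b β ε f i j = 0) ↔
    (∀ i j : ℕ, co f i j =
      (descPochhammer ℂ i).eval ((β - (b : ℂ) * (j : ℂ)) / (a : ℂ)) * co f 0 j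
        / ((i.factorial : ℂ) * ε ^ i)) :=
  euler_kernel_coefficient_formula_general a b ha β ε hε f

end
end

section
/- Let a and b be coprime integers with 0 < a < b, let ε ∈ ℂ with ε ≠ 0, suppose β ∈ ℂ satisfies β ≠ a·n₁ + b·n₂ for all n₁, n₂ ∈ ℕ, and let s be a real number with 1 ≤ s < b/a. If f ∈ ℂ[[t₁,x₂]] is Gevrey of order s and satisfies P f = 0 and E_p f = 0, then f = 0. -/
/-!
`E_p f = 0` is a first-order recurrence in `i`, so every coefficient is determined by the
column `f_{(0,j)}`, and `P f = 0` at `i = 0` then links `f_{(0,j+a)}` to `f_{(0,j)}`: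
`(aε)^b · (j+1)⋯(j+a) · f_{(0,j+a)} = f_{(0,j)} · ∏_{k<b} (β - a k - b j)`.
Nonresonance keeps the product nonzero, so a nonzero `f_{(0,j₀)}` propagates along `j₀ + aℕ`,
where `|f_{(0,j+a)} / f_{(0,j)}|` grows like `j^(b-a)`. The Gevrey bound only allows growth
like `j^(a(s-1))`, and `a s < b`, so the coefficients eventually outgrow it.
-/

noncomputable section

open Finset Filter

theorem eq_zero_of_forall_co_eq_zero (f : M2) (h : ∀ i j, co f i j = 0) : f = 0 := by
  ext d
  have hd : d = Finsupp.single 0 (d 0) + Finsupp.single 1 (d 1) := by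
    ext x
    fin_cases x <;> simp
  rw [hd]
  exact (h (d 0) (d 1)).trans (map_zero _).symm

theorem not_forall_le_of_eventually_two_mul_le {u v : ℕ → ℝ} (hu : ∀ n, 0 < u n)
    (hv : ∀ n, 0 < v n) (h : ∀ᶠ n in atTop, 2 * v (n + 1) * u n ≤ u (n + 1) * v n) :
    ¬ ∀ n, u n ≤ v n := by
  obtain ⟨N, hN⟩ := eventually_atTop.mp h
  have growth : ∀ n, 2 ^ n * u N * v (N + n) ≤ u (N + n) * v N := by
    intro n
    induction n with
    | zero => simp
    | succ n ih =>
      refine le_of_mul_le_mul_right ?_ (hv (N + n))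
      have hstep := hN (N + n) (by omega)
      have hv₁ := (hv (N + n + 1)).le
      calc 2 ^ (n + 1) * u N * v (N + n + 1) * v (N + n)
          = 2 * v (N + n + 1) * (2 ^ n * u N * v (N + n)) := by ring
        _ ≤ 2 * v (N + n + 1) * (u (N + n) * v N) := by gcongr
        _ = 2 * v (N + n + 1) * u (N + n) * v N := by ring
        _ ≤ u (N + n + 1) * v (N + n) * v N := by gcongr; exact (hv N).le
        _ = u (N + n + 1) * v N * v (N + n) := by ring
  intro hle
  obtain ⟨n, hn⟩ := pow_unbounded_of_one_lt (v N / u N) one_lt_two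
  have hbounded : 2 ^ n * u N ≤ v N := by
    refine le_of_mul_le_mul_right ?_ (hv (N + n))
    calc 2 ^ n * u N * v (N + n) ≤ u (N + n) * v N := growth n
      _ ≤ v (N + n) * v N := by gcongr; exacts [(hv N).le, hle (N + n)]
      _ = v N * v (N + n) := mul_comm _ _
  rw [div_lt_iff₀ (hu N)] at hn
  linarith

theorem eventually_mul_ascFactorial_rpow_le_pow {a b : ℕ} {s : ℝ} (hs : 0 ≤ s)
    (has : a * s < b) {K : ℝ} (hK : 0 ≤ K) :
    ∀ᶠ j : ℕ in atTop, K * ((j + 1).ascFactorial a : ℝ) ^ s ≤ (j : ℝ) ^ b := by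
  have hgap : Tendsto (fun j : ℕ => (j : ℝ) ^ ((b : ℝ) - a * s)) atTop atTop :=
    (tendsto_rpow_atTop (by linarith)).comp tendsto_natCast_atTop_atTop
  filter_upwards [hgap.eventually_ge_atTop (K * 2 ^ (a * s)), eventually_ge_atTop (max a 1)]
    with j hgapj hj
  have hjpos : (0 : ℝ) < j := by exact_mod_cast (le_of_max_le_right hj)
  have hasc : ((j + 1).ascFactorial a : ℝ) ≤ ((2 * j : ℕ) : ℝ) ^ a := by
    exact_mod_cast (Nat.ascFactorial_le_pow_add j a).trans
      (Nat.pow_le_pow_left (by omega) a)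
  calc K * ((j + 1).ascFactorial a : ℝ) ^ s ≤ K * (((2 * j : ℕ) : ℝ) ^ a) ^ s := by gcongr
    _ = K * 2 ^ (a * s) * (j : ℝ) ^ (a * s) := by
      rw [← Real.rpow_natCast, ← Real.rpow_mul (by positivity), Nat.cast_mul,
        Real.mul_rpow (by positivity) (by positivity)]
      push_cast
      ring
    _ ≤ (j : ℝ) ^ ((b : ℝ) - a * s) * (j : ℝ) ^ (a * s) := by gcongr
    _ = (j : ℝ) ^ b := by rw [← Real.rpow_add hjpos, sub_add_cancel, Real.rpow_natCast]

theorem pow_le_prod_norm_sub {a b : ℕ} (hb : 2 ≤ b) {β : ℂ} {j : ℕ} (hj : ‖β‖ ≤ j) :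
    (j : ℝ) ^ b ≤ ∏ k ∈ range b, ‖β - ((a * k + b * j : ℕ) : ℂ)‖ := by
  calc (j : ℝ) ^ b = ∏ _k ∈ range b, (j : ℝ) := by simp
    _ ≤ _ := prod_le_prod (fun _ _ => by positivity) fun k _ => ?_
  have hb' : (2 : ℝ) ≤ b := by exact_mod_cast hb
  have := norm_sub_norm_le ((a * k + b * j : ℕ) : ℂ) β
  rw [norm_sub_rev, Complex.norm_natCast] at this
  push_cast at this ⊢
  nlinarith [(Nat.cast_nonneg (α := ℝ) j), (by positivity : (0 : ℝ) ≤ a * k)]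


section HypergeometricSystem

variable {a b : ℕ} {β ε : ℂ} {f : M2}

theorem mul_co_eq_co_zero_mul_prod (hE : ∀ i j, Epco a b β ε f i j = 0) (i j : ℕ) :
    ((a : ℂ) * ε) ^ i * i.factorial * co f i j
      = co f 0 j * ∏ k ∈ range i, (β - ((a * k + b * j : ℕ) : ℂ)) := by
  induction i with
  | zero => simp
  | succ i ih =>
    have hEi := hE i j
    rw [Epco] at hEi
    rw [prod_range_succ, Nat.factorial_succ, Nat.cast_mul, Nat.cast_succ]
    linear_combination ((a : ℂ) * ε) ^ i * i.factorial * hEi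
      + (β - ((a * i + b * j : ℕ) : ℂ)) * ih

theorem co_zero_add_recurrence (hP : ∀ i j, Pco a b f i j = 0)
    (hE : ∀ i j, Epco a b β ε f i j = 0) (j : ℕ) :
    ((a : ℂ) * ε) ^ b * (j + 1).ascFactorial a * co f 0 (j + a)
      = co f 0 j * ∏ k ∈ range b, (β - ((a * k + b * j : ℕ) : ℂ)) := by
  have hPj := hP 0 j
  simp only [Pco, zero_add, Nat.factorial_zero, Nat.div_one, ← Nat.ascFactorial_eq_div] at hPj
  rw [← mul_co_eq_co_zero_mul_prod hE]
  linear_combination -((a : ℂ) * ε) ^ b * hPj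

theorem co_zero_add_mul_ne_zero (hP : ∀ i j, Pco a b f i j = 0)
    (hE : ∀ i j, Epco a b β ε f i j = 0) (hβ : ∀ n₁ n₂ : ℕ, β ≠ (a : ℂ) * n₁ + (b : ℂ) * n₂)
    {j : ℕ} (hj : co f 0 j ≠ 0) (n : ℕ) : co f 0 (j + a * n) ≠ 0 := by
  induction n with
  | zero => simpa using hj
  | succ n ih =>
    intro hzero
    have hrec := co_zero_add_recurrence hP hE (j + a * n)
    rw [mul_add, mul_one, ← add_assoc] at hzero
    rw [hzero, mul_zero, eq_comm, mul_eq_zero] at hrec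
    refine hrec.elim ih (prod_ne_zero_iff.mpr fun k _ => sub_ne_zero.mpr ?_)
    exact_mod_cast hβ k (j + a * n)

theorem eventually_co_zero_outgrows_gevrey_weight (hP : ∀ i j, Pco a b f i j = 0)
    (hE : ∀ i j, Epco a b β ε f i j = 0) (ha : 0 < a) (hb : 2 ≤ b) (hε : ε ≠ 0)
    {s C R : ℝ} (hs : 0 ≤ s) (has : a * s < b) (hC : 0 ≤ C) (hR : 0 < R) :
    ∀ᶠ j : ℕ in atTop,
      2 * (C * R ^ (j + a) * ((j + a).factorial : ℝ) ^ (s - 1)) * ‖co f 0 j‖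
        ≤ ‖co f 0 (j + a)‖ * (C * R ^ j * (j.factorial : ℝ) ^ (s - 1)) := by
  have hc : 0 < ‖(a : ℂ) * ε‖ ^ b :=
    pow_pos (norm_pos_iff.mpr (mul_ne_zero (Nat.cast_ne_zero.mpr ha.ne') hε)) b
  filter_upwards [eventually_mul_ascFactorial_rpow_le_pow hs has
      (by positivity : 0 ≤ 2 * R ^ a * ‖(a : ℂ) * ε‖ ^ b),
    eventually_ge_atTop ⌈‖β‖⌉₊] with j hpow hβj
  set D : ℝ := Nat.cast ((j + 1).ascFactorial a) with hDdef
  have hD : 0 < D := Nat.cast_pos.mpr (Nat.ascFactorial_pos j a)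
  have hfac : ((j + a).factorial : ℝ) = j.factorial * D := by
    rw [hDdef]
    exact_mod_cast (Nat.factorial_mul_ascFactorial j a).symm
  have hrec : ‖(a : ℂ) * ε‖ ^ b * D * ‖co f 0 (j + a)‖
      = ‖co f 0 j‖ * ∏ k ∈ range b, ‖β - ((a * k + b * j : ℕ) : ℂ)‖ := by
    simpa [norm_mul, norm_prod, D] using congrArg norm (co_zero_add_recurrence hP hE j)
  have hgrowth : 2 * R ^ a * D ^ (s - 1) * ‖co f 0 j‖ ≤ ‖co f 0 (j + a)‖ := by
    refine le_of_mul_le_mul_left ?_ (mul_pos hc hD)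
    calc ‖(a : ℂ) * ε‖ ^ b * D * (2 * R ^ a * D ^ (s - 1) * ‖co f 0 j‖)
        = 2 * R ^ a * ‖(a : ℂ) * ε‖ ^ b * D ^ s * ‖co f 0 j‖ := by
          rw [Real.rpow_sub_one hD.ne']
          field_simp
      _ ≤ (j : ℝ) ^ b * ‖co f 0 j‖ := by gcongr
      _ ≤ (∏ k ∈ range b, ‖β - ((a * k + b * j : ℕ) : ℂ)‖) * ‖co f 0 j‖ := by
          gcongr
          exact pow_le_prod_norm_sub hb (Nat.ceil_le.mp hβj)
      _ = _ := by rw [hrec, mul_comm]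
  calc 2 * (C * R ^ (j + a) * ((j + a).factorial : ℝ) ^ (s - 1)) * ‖co f 0 j‖
      = C * R ^ j * (j.factorial : ℝ) ^ (s - 1) * (2 * R ^ a * D ^ (s - 1) * ‖co f 0 j‖) := by
        rw [hfac, Real.mul_rpow (by positivity) hD.le, pow_add]
        ring
    _ ≤ C * R ^ j * (j.factorial : ℝ) ^ (s - 1) * ‖co f 0 (j + a)‖ := by gcongr
    _ = _ := mul_comm _ _

theorem co_zero_eq_zero_of_gevrey (hP : ∀ i j, Pco a b f i j = 0)
    (hE : ∀ i j, Epco a b β ε f i j = 0) (hβ : ∀ n₁ n₂ : ℕ, β ≠ (a : ℂ) * n₁ + (b : ℂ) * n₂)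
    (ha : 0 < a) (hb : 2 ≤ b) (hε : ε ≠ 0) {s : ℝ} (hs : 0 ≤ s) (has : a * s < b)
    (hG : GevreyFn s (co f)) (j : ℕ) : co f 0 j = 0 := by
  obtain ⟨C, R, hC, hR, hbound⟩ := hG
  by_contra hj
  have hidx : Tendsto (fun n => j + a * n) atTop atTop :=
    tendsto_atTop_mono (fun n => le_add_left (Nat.le_mul_of_pos_left n ha)) tendsto_id
  refine not_forall_le_of_eventually_two_mul_le
    (u := fun n => ‖co f 0 (j + a * n)‖)
    (v := fun n => C * R ^ (j + a * n) * ((j + a * n).factorial : ℝ) ^ (s - 1))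
    (fun n => norm_pos_iff.mpr (co_zero_add_mul_ne_zero hP hE hβ hj n))
    (fun n => by positivity) ?_ (fun n => by simpa using hbound 0 (j + a * n))
  filter_upwards [hidx.eventually (eventually_co_zero_outgrows_gevrey_weight hP hE ha hb hε hs has hC.le hR)]
    with n hn
  simpa only [mul_add, mul_one, ← add_assoc] using hn

end HypergeometricSystem

theorem gevrey_solution_below_slope_is_zero_nonresonant_general
    (a b : ℕ) (ha : 0 < a) (haltb : a < b)
    (ε : ℂ) (hε : ε ≠ 0) (β : ℂ)
    (hβ : ∀ n₁ n₂ : ℕ, β ≠ (a : ℂ) * n₁ + (b : ℂ) * n₂)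
    (s : ℝ) (hs1 : 1 ≤ s) (hs2 : s < (b : ℝ) / (a : ℝ))
    (f : M2) (hfG : GevreyFn s (co f))
    (hfP : ∀ i j : ℕ, Pco a b f i j = 0)
    (hfE : ∀ i j : ℕ, Epco a b β ε f i j = 0) :
    f = 0 := by
  have has : a * s < b := (lt_div_iff₀' (by positivity)).mp hs2
  have hzero := co_zero_eq_zero_of_gevrey hfP hfE hβ ha (by omega) hε (by linarith) has hfG
  refine eq_zero_of_forall_co_eq_zero f fun i j => ?_
  have hunit : ((a : ℂ) * ε) ^ i * i.factorial ≠ 0 := by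
    have : (a : ℂ) ≠ 0 := by exact_mod_cast ha.ne'
    have := i.factorial_ne_zero
    positivity
  simpa [hzero, hunit] using mul_co_eq_co_zero_mul_prod hfE i j

/-- If `β ∉ a·ℕ + b·ℕ` and `1 ≤ s < b/a`, then the only Gevrey solution of order `s` of the
hypergeometric system at `p = (ε,0)`, `ε ≠ 0`, is `f = 0`. -/
theorem gevrey_solution_below_slope_is_zero_nonresonant
    (a b : ℕ) (hab : Nat.Coprime a b) (ha : 0 < a) (haltb : a < b)
    (ε : ℂ) (hε : ε ≠ 0) (β : ℂ)
    (hβ : ∀ n₁ n₂ : ℕ, β ≠ (a : ℂ) * n₁ + (b : ℂ) * n₂)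
    (s : ℝ) (hs1 : 1 ≤ s) (hs2 : s < (b : ℝ) / (a : ℝ))
    (f : M2) (hfG : GevreyFn s (co f))
    (hfP : ∀ i j : ℕ, Pco a b f i j = 0)
    (hfE : ∀ i j : ℕ, Epco a b β ε f i j = 0) :
    f = 0 :=
  gevrey_solution_below_slope_is_zero_nonresonant_general a b ha haltb ε hε β hβ s hs1 hs2 f hfG hfP
    hfE

end
end

section
/- Let a and b be coprime integers with 0 < a < b, β ∈ ℂ, ε ∈ ℂ with ε ≠ 0, and let s be a real number with 1 ≤ s < ∞. For every g ∈ ℂ[[t₁,x₂]] that is Gevrey of order s there exists h ∈ ℂ[[t₁,x₂]] Gevrey of order s with E_p h = g. (The Euler operator E_p induces a surjective endomorphism of the space of Gevrey series of order s at the point p = (ε,0).) -/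
noncomputable section

/-!
Solving `(E_p h)_{(i,j)} = g_{(i,j)}` for `h_{(i+1,j)}` determines `h` row by row from
`h_{(0,j)} = 0`, since the coefficient `a·ε·(i+1)` of `h_{(i+1,j)}` never vanishes. The price of
each step is a factor `(a·i + b·j - β)/(a·ε·(i+1))`, of size about `(i+j+1)/(i+1)`; over `i`
steps these factors multiply to the binomial coefficient `(i+j choose i) ≤ 2^(i+j)`, which is
absorbed into the geometric factor `R^(i+j)` and leaves the Gevrey factor `(j!)^(s-1)` untouched.
-/

open Nat

def ofCoeff (F : ℕ → ℕ → ℂ) : M2 := fun d => F (d 0) (d 1)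

@[simp]
lemma co_ofCoeff (F : ℕ → ℕ → ℂ) (i j : ℕ) : co (ofCoeff F) i j = F i j := by
  simp [co, ofCoeff, MvPowerSeries.coeff_apply]

lemma gevreyFn_of_norm_le_choose {s C T : ℝ} {F : ℕ → ℕ → ℂ} (hC : 0 < C) (hT : 0 < T)
    (hF : ∀ i j, ‖F i j‖ ≤ C * (j ! : ℝ) ^ (s - 1) * T ^ (i + j) * (i + j).choose i) :
    GevreyFn s F := by
  refine ⟨C, 2 * T, hC, by positivity, fun i j => (hF i j).trans ?_⟩
  have hchoose : ((i + j).choose i : ℝ) ≤ 2 ^ (i + j) := by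
    exact_mod_cast Nat.choose_le_two_pow _ _
  calc C * (j ! : ℝ) ^ (s - 1) * T ^ (i + j) * (i + j).choose i
      ≤ C * (j ! : ℝ) ^ (s - 1) * T ^ (i + j) * 2 ^ (i + j) := by gcongr
    _ = C * (2 * T) ^ (i + j) * (j ! : ℝ) ^ (s - 1) := by ring

lemma le_mul_pow_mul_choose_of_recurrence {x : ℕ → ℝ} {j : ℕ} {A K T D : ℝ} (hA : 0 < A)
    (hK : 0 ≤ K) (hD : 0 ≤ D) (hKT : K + 1 ≤ T * A) (h0 : x 0 = 0)
    (hrec : ∀ i : ℕ, A * (i + 1) * x (i + 1) ≤ D * T ^ (i + j) + K * (i + j + 1) * x i) :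
    ∀ i : ℕ, x i ≤ D * T ^ (i + j) * (i + j).choose i := by
  have hT : 0 < T := by nlinarith
  intro i
  induction i with
  | zero =>
    simp only [h0, zero_add, Nat.choose_zero_right, Nat.cast_one, mul_one]
    positivity
  | succ i ih =>
    set P := D * T ^ (i + j)
    have hP : 0 ≤ P := by positivity
    have hB : (i + j + 1 : ℝ) * (i + j).choose i = (i + 1) * (i + 1 + j).choose (i + 1) := by
      have hnat : (i + j + 1) * (i + j).choose i = (i + 1) * (i + 1 + j).choose (i + 1) := by
        rw [Nat.add_one_mul_choose_eq, Nat.add_right_comm i 1 j, mul_comm]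
      exact_mod_cast hnat
    set B := ((i + 1 + j).choose (i + 1) : ℝ)
    have hB1 : 1 ≤ (i + 1) * B := by
      have : (1 : ℝ) ≤ B := Nat.one_le_cast.2 (Nat.choose_pos (by omega))
      nlinarith
    have hAi : 0 < A * (i + 1) := by positivity
    refine le_of_mul_le_mul_left ?_ hAi
    calc A * (i + 1) * x (i + 1) ≤ P + K * (i + j + 1) * x i := hrec i
      _ ≤ P + K * (i + j + 1) * (P * (i + j).choose i) := by gcongr
      _ = P + K * P * ((i + 1) * B) := by rw [← hB]; ring
      _ ≤ (K + 1) * P * ((i + 1) * B) := by nlinarith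
      _ ≤ T * A * P * ((i + 1) * B) := by gcongr
      _ = A * (i + 1) * (D * T ^ (i + 1 + j) * B) := by
        rw [Nat.add_right_comm, pow_succ]; ring

lemma norm_natCast_sub_le (a b i j : ℕ) (β : ℂ) :
    ‖((a * i + b * j : ℕ) : ℂ) - β‖ ≤ (a + b + ‖β‖) * (i + j + 1) := by
  refine (norm_sub_le _ _).trans ?_
  rw [Complex.norm_natCast]
  push_cast
  nlinarith [norm_nonneg β, (i.cast_nonneg : (0 : ℝ) ≤ i), (j.cast_nonneg : (0 : ℝ) ≤ j)]

def eulerSolCoeff (a b : ℕ) (β ε : ℂ) (g : ℕ → ℕ → ℂ) : ℕ → ℕ → ℂ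
  | 0, _ => 0
  | i + 1, j =>
    (g i j - (((a * i + b * j : ℕ) : ℂ) - β) * eulerSolCoeff a b β ε g i j) / (a * ε * (i + 1))

section EulerSolution

variable {a b : ℕ} {β ε : ℂ}

lemma eulerSolCoeff_succ (ha : a ≠ 0) (hε : ε ≠ 0) (g : ℕ → ℕ → ℂ) (i j : ℕ) :
    a * ε * (i + 1) * eulerSolCoeff a b β ε g (i + 1) j
      = g i j - (((a * i + b * j : ℕ) : ℂ) - β) * eulerSolCoeff a b β ε g i j := by
  rw [eulerSolCoeff]
  exact mul_div_cancel₀ _ <|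
    mul_ne_zero (mul_ne_zero (Nat.cast_ne_zero.2 ha) hε) (Nat.cast_add_one_ne_zero i)

lemma epco_ofCoeff_eulerSolCoeff (ha : a ≠ 0) (hε : ε ≠ 0) (g : M2) (i j : ℕ) :
    Epco a b β ε (ofCoeff (eulerSolCoeff a b β ε (co g))) i j = co g i j := by
  rw [Epco, co_ofCoeff, co_ofCoeff, eulerSolCoeff_succ ha hε]
  ring

lemma norm_eulerSolCoeff_le (ha : a ≠ 0) (hε : ε ≠ 0) {g : ℕ → ℕ → ℂ} {w : ℕ → ℝ} {T : ℝ}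
    (hw : ∀ j, 0 ≤ w j) (hg : ∀ i j, ‖g i j‖ ≤ w j * T ^ (i + j))
    (hT : a + b + ‖β‖ + 1 ≤ T * (a * ‖ε‖)) (i j : ℕ) :
    ‖eulerSolCoeff a b β ε g i j‖ ≤ w j * T ^ (i + j) * (i + j).choose i := by
  refine le_mul_pow_mul_choose_of_recurrence (x := fun i => ‖eulerSolCoeff a b β ε g i j‖)
    (by positivity) (by positivity) (hw j) hT (by simp [eulerSolCoeff])
    (fun i => ?_) i
  have hnorm : ‖(a : ℂ) * ε * (i + 1)‖ = a * ‖ε‖ * (i + 1) := by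
    rw [← Nat.cast_add_one, norm_mul, norm_mul, Complex.norm_natCast, Complex.norm_natCast]
    push_cast
    ring
  calc a * ‖ε‖ * (i + 1) * ‖eulerSolCoeff a b β ε g (i + 1) j‖
      = ‖g i j - (((a * i + b * j : ℕ) : ℂ) - β) * eulerSolCoeff a b β ε g i j‖ := by
        rw [← eulerSolCoeff_succ ha hε, norm_mul, hnorm]
    _ ≤ w j * T ^ (i + j) + (a + b + ‖β‖) * (i + j + 1) * ‖eulerSolCoeff a b β ε g i j‖ := by
        refine (norm_sub_le _ _).trans (add_le_add (hg i j) ?_)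
        rw [norm_mul]
        gcongr
        exact norm_natCast_sub_le a b i j β

end EulerSolution

theorem euler_surjective_on_gevrey_general
    (a b : ℕ) (ha : 0 < a)
    (β : ℂ) (ε : ℂ) (hε : ε ≠ 0) (s : ℝ)
    (g : M2) (hg : GevreyFn s (co g)) :
    ∃ h : M2, GevreyFn s (co h) ∧ ∀ i j : ℕ, Epco a b β ε h i j = co g i j := by
  obtain ⟨C, R, hC, hR, hgR⟩ := hg
  have hA : 0 < (a : ℝ) * ‖ε‖ := by positivity
  set T := max R ((a + b + ‖β‖ + 1) / (a * ‖ε‖))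
  have hRT : R ≤ T := le_max_left _ _
  have hgT : ∀ i j, ‖co g i j‖ ≤ C * (j ! : ℝ) ^ (s - 1) * T ^ (i + j) := fun i j =>
    (hgR i j).trans (by rw [mul_right_comm]; gcongr)
  refine ⟨ofCoeff (eulerSolCoeff a b β ε (co g)),
    gevreyFn_of_norm_le_choose hC (hR.trans_le hRT) fun i j => ?_,
    epco_ofCoeff_eulerSolCoeff ha.ne' hε g⟩
  rw [co_ofCoeff]
  exact norm_eulerSolCoeff_le ha.ne' hε (fun j => by positivity) hgT
    ((div_le_iff₀ hA).1 (le_max_right _ _)) i j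

/-- The Euler operator `E_p` is surjective on Gevrey series of order `s` at `p = (ε,0)`:
for every `g` Gevrey of order `s` there is `h` Gevrey of order `s` with `E_p h = g`. -/
theorem euler_surjective_on_gevrey
    (a b : ℕ) (hab : Nat.Coprime a b) (ha : 0 < a) (haltb : a < b)
    (β : ℂ) (ε : ℂ) (hε : ε ≠ 0) (s : ℝ) (hs : 1 ≤ s)
    (g : M2) (hg : GevreyFn s (co g)) :
    ∃ h : M2, GevreyFn s (co h) ∧ ∀ i j : ℕ, Epco a b β ε h i j = co g i j :=
  euler_surjective_on_gevrey_general a b ha β ε hε s g hg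
end
end

section
/- Let a and b be coprime integers with 0 < a < b, β ∈ ℂ, ε ∈ ℂ with ε ≠ 0, and let s ≥ b/a be a real number. If f, g ∈ ℂ[[t₁,x₂]] are Gevrey of order s and satisfy (E_p + ab) f = P g, i.e. coefficientwise (a·i + b·j − β + ab)·f_{(i,j)} + a·ε·(i+1)·f_{(i+1,j)} = (P g)_{(i,j)} for all i, j, then there exists h ∈ ℂ[[t₁,x₂]] Gevrey of order s with P h = f and E_p h = g. (This expresses the vanishing Ext¹(M_A(β), O_{X̂|Y}(s))_p = 0 for s ≥ b/a.) -/
/-!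
Since `ε ≠ 0`, the equation `E_p h = g` determines each column `i ↦ h_{(i,j)}` from its first
entry `h_{(0,j)}` by a first-order recursion in `i`, and `(P h)_{(0,j)} = f_{(0,j)}` then
determines `h_{(0,j+a)}` from column `j`; we take `h_{(0,j)} = 0` for `j < a`. The commutation
relation `(E_p + ab) P = P E_p` and the compatibility of `f` and `g` give
`(E_p + ab)(P h - f) = 0`, and since `P h - f` vanishes on `t₁ = 0`, the same kind of recursion
forces `P h = f`.

For the Gevrey bound, column `j` grows at most like `T^i · C(i + bj + B, i)`, so one step
`j ↦ j + a` along `t₁ = 0` loses a factor `(j + 1)^b` while dividing by `(j + a)!/j!`. The weight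
`(j!)^(s-1)` absorbs this loss because `(j + 1)^b ≤ ((j + a)!/j!)^s` when `b ≤ a s`.
-/

noncomputable section

namespace GevreyFn

open Nat

variable {s : ℝ}

theorem of_le {F : ℕ → ℕ → ℂ} {C A B : ℝ} (hC : 0 ≤ C) (hA : 0 ≤ A) (hB : 0 ≤ B)
    (hF : ∀ i j, ‖F i j‖ ≤ C * A ^ i * B ^ j * (j ! : ℝ) ^ (s - 1)) : GevreyFn s F := by
  refine ⟨C + 1, max A B + 1, by linarith, by positivity, fun i j => (hF i j).trans ?_⟩
  rw [pow_add, ← mul_assoc (C + 1)]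
  gcongr
  · linarith
  · exact (le_max_left A B).trans (by linarith)
  · exact (le_max_right A B).trans (by linarith)

theorem exists_common_bound {F G : ℕ → ℕ → ℂ} (hF : GevreyFn s F) (hG : GevreyFn s G) :
    ∃ C R : ℝ, 0 ≤ C ∧ 1 ≤ R ∧ ∀ i j,
      ‖F i j‖ ≤ C * R ^ (i + j) * (j ! : ℝ) ^ (s - 1) ∧
      ‖G i j‖ ≤ C * R ^ (i + j) * (j ! : ℝ) ^ (s - 1) := by
  obtain ⟨C₁, R₁, hC₁, hR₁, hF⟩ := hF
  obtain ⟨C₂, R₂, hC₂, hR₂, hG⟩ := hG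
  refine ⟨C₁ + C₂, max (max R₁ R₂) 1, by positivity, le_max_right _ _, fun i j => ⟨?_, ?_⟩⟩
  · refine (hF i j).trans ?_
    gcongr
    · linarith
    · exact (le_max_left _ _).trans (le_max_left _ _)
  · refine (hG i j).trans ?_
    gcongr
    · linarith
    · exact (le_max_right _ _).trans (le_max_left _ _)

end GevreyFn

namespace ExtOne

open Nat

section Recurrence

variable {x y w : ℕ → ℂ}

def firstOrderRec (w d y : ℕ → ℂ) (z : ℂ) : ℕ → ℂ
  | 0 => z
  | i + 1 => (y i - w i * firstOrderRec w d y z i) / d i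

theorem firstOrderRec_spec {d : ℕ → ℂ} (hd : ∀ i, d i ≠ 0) (z : ℂ) (i : ℕ) :
    w i * firstOrderRec w d y z i + d i * firstOrderRec w d y z (i + 1) = y i := by
  rw [firstOrderRec, mul_div_cancel₀ _ (hd i), add_sub_cancel]

theorem eq_zero_of_recurrence {d : ℕ → ℂ} (hd : ∀ i, d i ≠ 0) (hx0 : x 0 = 0)
    (hrec : ∀ i, w i * x i + d i * x (i + 1) = 0) : ∀ i, x i = 0
  | 0 => hx0
  | i + 1 => by
    simpa [eq_zero_of_recurrence hd hx0 hrec i, hd i] using hrec i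

theorem norm_le_of_recurrence {δ : ℂ} {A K T : ℝ} {M : ℕ}
    (hrec : ∀ i, w i * x i + δ * (i + 1) * x (i + 1) = y i)
    (hx0 : ‖x 0‖ ≤ K) (hy : ∀ i, ‖y i‖ ≤ K * T ^ i)
    (hw : ∀ i, ‖w i‖ ≤ A * (i + 1 + M)) (hT : 1 + A ≤ T * ‖δ‖) :
    ∀ i, ‖x i‖ ≤ K * T ^ i * (i + M).choose i
  | 0 => by simpa using hx0
  | i + 1 => by
    have ih := norm_le_of_recurrence hrec hx0 hy hw hT i
    have hKT : 0 ≤ K * T ^ i := (norm_nonneg _).trans (hy i)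
    have hA : 0 ≤ A :=
      nonneg_of_mul_nonneg_left ((norm_nonneg _).trans (hw 0)) (by positivity)
    have hδ : 0 < ‖δ‖ := by
      by_contra! h
      rw [le_antisymm h (norm_nonneg δ), mul_zero] at hT
      linarith
    have hchoose : ((i + 1 + M : ℕ) : ℝ) * (i + M).choose i
        = (i + 1) * (i + 1 + M).choose (i + 1) := by
      have := Nat.add_one_mul_choose_eq (i + M) i
      rw [show i + M + 1 = i + 1 + M by omega] at this
      exact_mod_cast this.trans (mul_comm _ _)
    have hC : (1 : ℝ) ≤ (i + 1 + M).choose (i + 1) := by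
      exact_mod_cast Nat.choose_pos (by omega)
    have hsum : ‖δ * (i + 1) * x (i + 1)‖
        ≤ K * T ^ i + A * (i + 1 + M) * (K * T ^ i * (i + M).choose i) := by
      rw [show δ * (i + 1) * x (i + 1) = y i - w i * x i by rw [← hrec i]; ring]
      refine (norm_sub_le _ _).trans (add_le_add (hy i) ?_)
      rw [norm_mul]
      exact mul_le_mul (hw i) ih (norm_nonneg _) ((norm_nonneg _).trans (hw i))
    rw [norm_mul, norm_mul, show ((i : ℂ) + 1) = ((i + 1 : ℕ) : ℂ) by push_cast; ring,
      Complex.norm_natCast] at hsum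
    push_cast at hsum hchoose ⊢
    have hpos : 0 < ‖δ‖ * (i + 1) := by positivity
    rw [← mul_le_mul_iff_right₀ hpos]
    calc ‖δ‖ * (i + 1) * ‖x (i + 1)‖
        ≤ K * T ^ i * (1 + A * ((i + 1) * (i + 1 + M).choose (i + 1))) := by
          rw [← hchoose]; linarith
      _ ≤ K * T ^ i * ((1 + A) * ((i + 1) * (i + 1 + M).choose (i + 1))) := by
          gcongr; nlinarith
      _ ≤ ‖δ‖ * (i + 1) * (K * T ^ (i + 1) * (i + 1 + M).choose (i + 1)) := by
          rw [pow_succ]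
          nlinarith [mul_le_mul_of_nonneg_right hT
            (by positivity : 0 ≤ K * T ^ i * ((i + 1) * (i + 1 + M).choose (i + 1)))]

end Recurrence

section Gevrey

variable {a b : ℕ} {s : ℝ}

theorem add_one_pow_le_descFactorial_rpow (hs : 0 ≤ s) (hbs : (b : ℝ) ≤ a * s) (j : ℕ) :
    ((j : ℝ) + 1) ^ b ≤ ((j + a).descFactorial a : ℝ) ^ s := by
  have hpow : ((j : ℝ) + 1) ^ a ≤ (j + a).descFactorial a := by
    have := Nat.pow_sub_le_descFactorial (j + a) a
    rw [show j + a + 1 - a = j + 1 by omega] at this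
    exact_mod_cast this
  calc ((j : ℝ) + 1) ^ b = ((j : ℝ) + 1) ^ (b : ℝ) := (Real.rpow_natCast _ _).symm
    _ ≤ ((j : ℝ) + 1) ^ ((a : ℝ) * s) := by
        gcongr
        linarith [(j.cast_nonneg : (0 : ℝ) ≤ j)]
    _ = (((j : ℝ) + 1) ^ a) ^ s := by rw [Real.rpow_mul (by positivity), Real.rpow_natCast]
    _ ≤ ((j + a).descFactorial a : ℝ) ^ s := by gcongr

theorem factorial_rpow_mul_div_descFactorial_le (hs : 0 ≤ s) (hbs : (b : ℝ) ≤ a * s) (j : ℕ) :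
    (j ! : ℝ) ^ (s - 1) * ((j : ℝ) + 1) ^ b / (j + a).descFactorial a
      ≤ ((j + a)! : ℝ) ^ (s - 1) := by
  have hD : (0 : ℝ) < (j + a).descFactorial a := by
    exact_mod_cast Nat.descFactorial_pos.mpr (by omega)
  have hfac : ((j + a)! : ℝ) = j ! * (j + a).descFactorial a := by
    have := Nat.factorial_mul_descFactorial (n := j + a) (k := a) (by omega)
    rw [Nat.add_sub_cancel] at this
    exact_mod_cast this.symm
  rw [hfac, Real.mul_rpow (by positivity) hD.le, mul_div_assoc, Real.rpow_sub_one hD.ne']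
  gcongr
  exact add_one_pow_le_descFactorial_rpow hs hbs j

theorem le_of_row_recurrence {x : ℕ → ℝ} {C R L : ℝ} (ha : 0 < a) (hs : 0 ≤ s)
    (hbs : (b : ℝ) ≤ a * s) (hC : 0 ≤ C) (hR : 1 ≤ R) (hL : 0 ≤ L)
    (hlt : ∀ j < a, x j = 0)
    (hstep : ∀ j, x (j + a) ≤
      L * (x j + C * R ^ j * (j ! : ℝ) ^ (s - 1)) * ((j : ℝ) + 1) ^ b
        / (j + a).descFactorial a) :
    ∀ j, x j ≤ C * max R (2 * L) ^ j * (j ! : ℝ) ^ (s - 1) := by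
  set R₁ := max R (2 * L)
  have hRR₁ : R ≤ R₁ := le_max_left _ _
  have hR₁ : 1 ≤ R₁ := hR.trans hRR₁
  intro j
  induction j using Nat.strong_induction_on with
  | _ j ih =>
    obtain hj | ⟨j, rfl⟩ : j < a ∨ ∃ k, j = k + a :=
      (lt_or_ge j a).imp_right fun h => ⟨j - a, by omega⟩
    · rw [hlt j hj]; positivity
    have hxj : x j + C * R ^ j * (j ! : ℝ) ^ (s - 1)
        ≤ 2 * C * R₁ ^ j * (j ! : ℝ) ^ (s - 1) := by
      have : R ^ j ≤ R₁ ^ j := pow_le_pow_left₀ (by linarith) hRR₁ j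
      nlinarith [ih j (by omega), mul_le_mul_of_nonneg_right (mul_le_mul_of_nonneg_left this hC)
        (by positivity : (0 : ℝ) ≤ (j ! : ℝ) ^ (s - 1))]
    calc x (j + a)
        ≤ L * (2 * C * R₁ ^ j * (j ! : ℝ) ^ (s - 1)) * ((j : ℝ) + 1) ^ b
            / (j + a).descFactorial a := by
          refine (hstep j).trans ?_
          gcongr
      _ = 2 * L * C * R₁ ^ j
            * ((j ! : ℝ) ^ (s - 1) * ((j : ℝ) + 1) ^ b / (j + a).descFactorial a) := by ring
      _ ≤ R₁ ^ a * C * R₁ ^ j * ((j + a)! : ℝ) ^ (s - 1) := by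
          gcongr
          · exact (le_max_right _ _).trans (le_self_pow₀ hR₁ ha.ne')
          · exact factorial_rpow_mul_div_descFactorial_le hs hbs j
      _ = C * R₁ ^ (j + a) * ((j + a)! : ℝ) ^ (s - 1) := by ring

end Gevrey

section Construction

theorem factorial_add_div_factorial (n k : ℕ) : (n + k)! / n ! = (n + k).descFactorial k := by
  rw [Nat.descFactorial_eq_div (by omega), Nat.add_sub_cancel]

variable {a b : ℕ} {β ε : ℂ}

theorem Pco_eq (h : M2) (i j : ℕ) : Pco a b h i j =
    (i + b).descFactorial b * co h (i + b) j - (j + a).descFactorial a * co h i (j + a) := by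
  simp only [Pco, factorial_add_div_factorial]

/-- The commutation relation `(E_p + ab) ∘ P = P ∘ E_p`. -/
theorem Pco_Epco_comm (h : M2) (i j : ℕ) :
    (((a * i + b * j : ℕ) : ℂ) - β + a * b) * Pco a b h i j
        + a * ε * (i + 1) * Pco a b h (i + 1) j
      = (i + b).descFactorial b * Epco a b β ε h (i + b) j
        - (j + a).descFactorial a * Epco a b β ε h i (j + a) := by
  have hdesc : ((i : ℂ) + 1) * ((i + b + 1).descFactorial b : ℕ)
      = ((i + b + 1 : ℕ) : ℂ) * ((i + b).descFactorial b : ℕ) := by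
    have := Nat.succ_descFactorial (i + b) b
    rw [show i + b + 1 - b = i + 1 by omega] at this
    exact_mod_cast this
  simp only [Pco_eq, Epco, show i + 1 + b = i + b + 1 by omega]
  push_cast at hdesc ⊢
  linear_combination (a * ε * co h (i + b + 1) j) * hdesc

theorem natCast_mul_mul_add_one_ne_zero (ha : 0 < a) (hε : ε ≠ 0) (i : ℕ) :
    (a : ℂ) * ε * (i + 1) ≠ 0 :=
  mul_ne_zero (mul_ne_zero (by exact_mod_cast ha.ne') hε) (Nat.cast_add_one_ne_zero i)

variable (a b β ε) (f g : M2)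

/-- Column `j` of the solution of `E_p h = g` with `h_{(0,j)} = z`. -/
def epColumn (j : ℕ) (z : ℂ) : ℕ → ℂ :=
  firstOrderRec (fun i => ((a * i + b * j : ℕ) : ℂ) - β) (fun i => a * ε * (i + 1))
    (fun i => co g i j) z

/-- The value of `h_{(0,j+a)}` forced by `(P h)_{(0,j)} = f_{(0,j)}` when `h_{(0,j)} = z`. -/
def baseStep (j : ℕ) (z : ℂ) : ℂ :=
  ((b ! : ℂ) * epColumn a b β ε g j z b - co f 0 j) / (j + a).descFactorial a

/-- `baseRowAux r q` is `h_{(0, r + q a)}`. -/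
def baseRowAux (r : ℕ) : ℕ → ℂ
  | 0 => 0
  | q + 1 => baseStep a b β ε f g (r + q * a) (baseRowAux r q)

def baseRow (j : ℕ) : ℂ := baseRowAux a b β ε f g (j % a) (j / a)

def solution : M2 := fun d => epColumn a b β ε g (d 1) (baseRow a b β ε f g (d 1)) (d 0)

variable {a b β ε f g}

theorem co_solution (i j : ℕ) :
    co (solution a b β ε f g) i j = epColumn a b β ε g j (baseRow a b β ε f g j) i := by
  simp [co, solution, MvPowerSeries.coeff_apply]

theorem baseRow_of_lt {j : ℕ} (hj : j < a) : baseRow a b β ε f g j = 0 := by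
  rw [baseRow, Nat.div_eq_of_lt hj, baseRowAux]

theorem baseRow_add (ha : 0 < a) (j : ℕ) :
    baseRow a b β ε f g (j + a) = baseStep a b β ε f g j (baseRow a b β ε f g j) := by
  rw [baseRow, Nat.add_mod_right, Nat.add_div_right _ ha, baseRowAux, Nat.mod_add_div', baseRow]

theorem epColumn_zero (j : ℕ) (z : ℂ) : epColumn a b β ε g j z 0 = z := rfl

theorem epColumn_spec (ha : 0 < a) (hε : ε ≠ 0) (j : ℕ) (z : ℂ) (i : ℕ) :
    (((a * i + b * j : ℕ) : ℂ) - β) * epColumn a b β ε g j z i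
      + a * ε * (i + 1) * epColumn a b β ε g j z (i + 1) = co g i j :=
  firstOrderRec_spec (w := fun i => ((a * i + b * j : ℕ) : ℂ) - β) (y := fun i => co g i j)
    (natCast_mul_mul_add_one_ne_zero ha hε) z i

theorem Epco_solution (ha : 0 < a) (hε : ε ≠ 0) (i j : ℕ) :
    Epco a b β ε (solution a b β ε f g) i j = co g i j := by
  rw [Epco, co_solution, co_solution]
  exact epColumn_spec ha hε _ _ _

theorem Pco_solution_zero (ha : 0 < a) (j : ℕ) :
    Pco a b (solution a b β ε f g) 0 j = co f 0 j := by
  have hD : ((j + a).descFactorial a : ℂ) ≠ 0 := by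
    exact_mod_cast (Nat.descFactorial_pos.mpr (by omega)).ne'
  rw [Pco_eq, co_solution, co_solution, zero_add, baseRow_add ha, epColumn_zero, baseStep,
    Nat.descFactorial_self, mul_div_cancel₀ _ hD, sub_sub_cancel]

theorem Pco_solution (ha : 0 < a) (hε : ε ≠ 0)
    (hfg : ∀ i j : ℕ,
      (((a * i + b * j : ℕ) : ℂ) - β + (a : ℂ) * (b : ℂ)) * co f i j
        + (a : ℂ) * ε * ((i : ℂ) + 1) * co f (i + 1) j = Pco a b g i j)
    (i j : ℕ) : Pco a b (solution a b β ε f g) i j = co f i j := by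
  refine sub_eq_zero.mp (eq_zero_of_recurrence (x := fun i => Pco a b _ i j - co f i j)
    (w := fun i => ((a * i + b * j : ℕ) : ℂ) - β + a * b)
    (natCast_mul_mul_add_one_ne_zero ha hε) (sub_eq_zero.mpr (Pco_solution_zero ha j))
    (fun i => ?_) i)
  have hcomm := Pco_Epco_comm (a := a) (b := b) (β := β) (ε := ε) (solution a b β ε f g) i j
  have hPg := hfg i j
  simp only [Epco_solution ha hε] at hcomm
  rw [Pco_eq] at hPg
  linear_combination hcomm - hPg

end Construction

section Estimates

variable {a b : ℕ} {β ε : ℂ} {f g : M2} {s C R T : ℝ} {B : ℕ}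

theorem norm_epColumn_le (ha : 0 < a) (hε : ε ≠ 0) (hC : 0 ≤ C) (hR : 0 ≤ R)
    (hB : ‖β‖ ≤ B) (hRT : R ≤ T) (hT : 1 + a ≤ T * ‖(a : ℂ) * ε‖)
    (hg : ∀ i j, ‖co g i j‖ ≤ C * R ^ (i + j) * (j ! : ℝ) ^ (s - 1)) (j : ℕ) (z : ℂ) (i : ℕ) :
    ‖epColumn a b β ε g j z i‖
      ≤ (‖z‖ + C * R ^ j * (j ! : ℝ) ^ (s - 1)) * T ^ i * (i + (b * j + B)).choose i := by
  refine norm_le_of_recurrence (w := fun i => ((a * i + b * j : ℕ) : ℂ) - β) (A := a)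
    (epColumn_spec ha hε j z) (by rw [epColumn_zero]; exact le_add_of_nonneg_right (by positivity))
    (fun i => ?_) (fun i => ?_) hT i
  · calc ‖co g i j‖ ≤ C * R ^ j * (j ! : ℝ) ^ (s - 1) * R ^ i :=
          (hg i j).trans_eq (by rw [add_comm, pow_add]; ring)
      _ ≤ (‖z‖ + C * R ^ j * (j ! : ℝ) ^ (s - 1)) * T ^ i :=
          mul_le_mul (le_add_of_nonneg_left (norm_nonneg z)) (pow_le_pow_left₀ hR hRT i)
            (by positivity) (by positivity)
  · have ha1 : (1 : ℝ) ≤ a := by exact_mod_cast ha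
    calc ‖((a * i + b * j : ℕ) : ℂ) - β‖ ≤ ((a * i + b * j : ℕ) : ℝ) + B := by
          refine (norm_sub_le _ _).trans ?_
          rw [Complex.norm_natCast]
          gcongr
      _ ≤ a * (i + 1 + (b * j + B : ℕ)) := by
          push_cast
          nlinarith [mul_le_mul_of_nonneg_right ha1 (by positivity : (0 : ℝ) ≤ b * j + B)]

theorem norm_baseRow_le (ha : 0 < a) (hε : ε ≠ 0) (hs : 0 ≤ s) (hbs : (b : ℝ) ≤ a * s)
    (hC : 0 ≤ C) (hR : 1 ≤ R) (hB : ‖β‖ ≤ B) (hRT : R ≤ T) (hT : 1 + a ≤ T * ‖(a : ℂ) * ε‖)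
    (hf : ∀ i j, ‖co f i j‖ ≤ C * R ^ (i + j) * (j ! : ℝ) ^ (s - 1))
    (hg : ∀ i j, ‖co g i j‖ ≤ C * R ^ (i + j) * (j ! : ℝ) ^ (s - 1)) (j : ℕ) :
    ‖baseRow a b β ε f g j‖
      ≤ C * max R (2 * (b ! * T ^ b * (b + B) ^ b + 1)) ^ j * (j ! : ℝ) ^ (s - 1) := by
  have hT0 : 0 ≤ T := by linarith
  refine le_of_row_recurrence (x := fun j => ‖baseRow a b β ε f g j‖)
    (L := b ! * T ^ b * (b + B) ^ b + 1) ha hs hbs hC hR (by positivity)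
    (fun j hj => by rw [baseRow_of_lt hj, norm_zero]) (fun j => ?_) j
  set K := ‖baseRow a b β ε f g j‖ + C * R ^ j * (j ! : ℝ) ^ (s - 1)
  have hj1 : (1 : ℝ) ≤ ((j : ℝ) + 1) ^ b := one_le_pow₀ (by linarith [j.cast_nonneg (α := ℝ)])
  have hcol : ‖epColumn a b β ε g j (baseRow a b β ε f g j) b‖
      ≤ K * T ^ b * ((b + B) * ((j : ℝ) + 1)) ^ b := by
    refine (norm_epColumn_le ha hε hC (by linarith) hB hRT hT hg j _ b).trans
      (mul_le_mul_of_nonneg_left ?_ (by positivity))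
    calc ((b + (b * j + B)).choose b : ℝ) ≤ ((b + (b * j + B) : ℕ) : ℝ) ^ b := by
          exact_mod_cast Nat.choose_le_pow _ _
      _ ≤ ((b + B) * ((j : ℝ) + 1)) ^ b := by
          gcongr
          push_cast
          nlinarith [(j.cast_nonneg : (0 : ℝ) ≤ j), (B.cast_nonneg : (0 : ℝ) ≤ B)]
  have hf0 : ‖co f 0 j‖ ≤ K * ((j : ℝ) + 1) ^ b :=
    calc ‖co f 0 j‖ ≤ C * R ^ j * (j ! : ℝ) ^ (s - 1) := by simpa using hf 0 j
      _ ≤ K := le_add_of_nonneg_left (norm_nonneg _)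
      _ ≤ K * ((j : ℝ) + 1) ^ b := le_mul_of_one_le_right (by positivity) hj1
  rw [baseRow_add ha, baseStep, norm_div, Complex.norm_natCast]
  gcongr
  calc ‖(b ! : ℂ) * epColumn a b β ε g j (baseRow a b β ε f g j) b - co f 0 j‖
      ≤ b ! * ‖epColumn a b β ε g j (baseRow a b β ε f g j) b‖ + ‖co f 0 j‖ := by
        refine (norm_sub_le _ _).trans_eq ?_
        rw [norm_mul, Complex.norm_natCast]
    _ ≤ b ! * (K * T ^ b * ((b + B) * ((j : ℝ) + 1)) ^ b) + K * ((j : ℝ) + 1) ^ b := by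
        gcongr
    _ = (b ! * T ^ b * (b + B) ^ b + 1) * K * ((j : ℝ) + 1) ^ b := by rw [mul_pow]; ring

theorem gevreyFn_solution (ha : 0 < a) (hε : ε ≠ 0) (hs : 0 ≤ s) (hbs : (b : ℝ) ≤ a * s)
    (hC : 0 ≤ C) (hR : 1 ≤ R)
    (hf : ∀ i j, ‖co f i j‖ ≤ C * R ^ (i + j) * (j ! : ℝ) ^ (s - 1))
    (hg : ∀ i j, ‖co g i j‖ ≤ C * R ^ (i + j) * (j ! : ℝ) ^ (s - 1)) :
    GevreyFn s (co (solution a b β ε f g)) := by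
  set T := R + 2 / ‖ε‖
  set B := ⌈‖β‖⌉₊
  set R₁ := max R (2 * (b ! * T ^ b * (b + B) ^ b + 1))
  have hε0 : 0 < ‖ε‖ := norm_pos_iff.mpr hε
  have hRT : R ≤ T := le_add_of_nonneg_right (by positivity)
  have hT : 1 + a ≤ T * ‖(a : ℂ) * ε‖ := by
    have ha1 : (1 : ℝ) ≤ a := by exact_mod_cast ha
    have : T * ‖(a : ℂ) * ε‖ = R * a * ‖ε‖ + 2 * a := by
      rw [norm_mul, Complex.norm_natCast, show T = R + 2 / ‖ε‖ from rfl]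
      field_simp
    rw [this]
    nlinarith [mul_pos (mul_pos (by linarith : (0 : ℝ) < R) (by linarith : (0 : ℝ) < a)) hε0]
  have hRR₁ : R ≤ R₁ := le_max_left _ _
  refine GevreyFn.of_le (C := 2 * C * 2 ^ B) (A := 2 * T) (B := 2 ^ b * R₁) (by positivity)
    (by positivity) (by positivity) fun i j => ?_
  rw [co_solution]
  have hrow := norm_baseRow_le (f := f) ha hε hs hbs hC hR (Nat.le_ceil ‖β‖) hRT hT hf hg j
  have hchoose : ((i + (b * j + B)).choose i : ℝ) ≤ 2 ^ (i + (b * j + B)) := by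
    exact_mod_cast Nat.choose_le_two_pow _ _
  calc ‖epColumn a b β ε g j (baseRow a b β ε f g j) i‖
      ≤ (‖baseRow a b β ε f g j‖ + C * R ^ j * (j ! : ℝ) ^ (s - 1)) * T ^ i
          * (i + (b * j + B)).choose i :=
        norm_epColumn_le ha hε hC (by linarith) (Nat.le_ceil ‖β‖) hRT hT hg j _ i
    _ ≤ (C * R₁ ^ j * (j ! : ℝ) ^ (s - 1) + C * R₁ ^ j * (j ! : ℝ) ^ (s - 1)) * T ^ i
          * 2 ^ (i + (b * j + B)) := by
        gcongr
    _ = 2 * C * 2 ^ B * (2 * T) ^ i * (2 ^ b * R₁) ^ j * (j ! : ℝ) ^ (s - 1) := by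
        rw [pow_add, pow_add, pow_mul, mul_pow, mul_pow]
        ring

end Estimates

end ExtOne

theorem ext_one_gevrey_vanishes_above_slope_general
    (a b : ℕ) (ha : 0 < a)
    (β : ℂ) (ε : ℂ) (hε : ε ≠ 0) (s : ℝ) (hs : (b : ℝ) / (a : ℝ) ≤ s)
    (f g : M2) (hf : GevreyFn s (co f)) (hg : GevreyFn s (co g))
    (hfg : ∀ i j : ℕ,
      (((a * i + b * j : ℕ) : ℂ) - β + (a : ℂ) * (b : ℂ)) * co f i j
        + (a : ℂ) * ε * ((i : ℂ) + 1) * co f (i + 1) j = Pco a b g i j) :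
    ∃ h : M2, GevreyFn s (co h) ∧
      (∀ i j : ℕ, Pco a b h i j = co f i j) ∧
      (∀ i j : ℕ, Epco a b β ε h i j = co g i j) := by
  have hs0 : 0 ≤ s := (div_nonneg b.cast_nonneg a.cast_nonneg).trans hs
  have hbs : (b : ℝ) ≤ a * s := by
    rwa [div_le_iff₀ (by exact_mod_cast ha), mul_comm] at hs
  obtain ⟨C, R, hC, hR, hbound⟩ := hf.exists_common_bound hg
  exact ⟨ExtOne.solution a b β ε f g,
    ExtOne.gevreyFn_solution ha hε hs0 hbs hC hR (fun i j => (hbound i j).1)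
      (fun i j => (hbound i j).2),
    ExtOne.Pco_solution ha hε hfg, ExtOne.Epco_solution ha hε⟩

/-- Vanishing `Ext¹(M_A(β), O_{X̂|Y}(s))_p = 0` for `s ≥ b/a`: if `f, g` are Gevrey of order
`s` and `(E_p + ab) f = P g`, then there is `h` Gevrey of order `s` with `P h = f` and
`E_p h = g`. -/
theorem ext_one_gevrey_vanishes_above_slope
    (a b : ℕ) (hab : Nat.Coprime a b) (ha : 0 < a) (haltb : a < b)
    (β : ℂ) (ε : ℂ) (hε : ε ≠ 0) (s : ℝ) (hs : (b : ℝ) / (a : ℝ) ≤ s)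
    (f g : M2) (hf : GevreyFn s (co f)) (hg : GevreyFn s (co g))
    (hfg : ∀ i j : ℕ,
      (((a * i + b * j : ℕ) : ℂ) - β + (a : ℂ) * (b : ℂ)) * co f i j
        + (a : ℂ) * ε * ((i : ℂ) + 1) * co f (i + 1) j = Pco a b g i j) :
    ∃ h : M2, GevreyFn s (co h) ∧
      (∀ i j : ℕ, Pco a b h i j = co f i j) ∧
      (∀ i j : ℕ, Epco a b β ε h i j = co g i j) :=
  ext_one_gevrey_vanishes_above_slope_general a b ha β ε hε s hs f g hf hg hfg
end
end
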